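/- In the equilibrium profile s^e, for every real t with t ≠ s^e_k for all k ∈ {1,…,P}: the forecasted cost satisfies Ĉ(t | s^e) ≥ ρ; moreover, if t ∈ (t⁻, t⁺) then Ĉ(t | s^e) = ρ, and if t < t⁻ or t > t⁺ then Ĉ(t | s^e) = V(t) > ρ. -/

import Mathlib

/-- Schedule delay cost function `V(d) = β·max(−d,0) + γ·max(d,0)`. -/
noncomputable def sdc (β γ d : ℝ) : ℝ := β * max (-d) 0 + γ * max d 0

/-- Destination arrival times: `d 0 = s 0`, `d (k+1) = max (d k + m/μ) (s (k+1))`. -/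
noncomputable def arr (m μ : ℝ) (s : ℕ → ℝ) : ℕ → ℝ
  | 0 => s 0
  | k + 1 => max (arr m μ s k + m / μ) (s (k + 1))

/-- Trip cost of the `k`-th departing user. -/
noncomputable def cost (β γ m μ : ℝ) (s : ℕ → ℝ) (k : ℕ) : ℝ :=
  (arr m μ s k - s k) + sdc β γ (arr m μ s k)

/-- A time profile: strictly increasing departure times (0-indexed, users `0,…,P-1`). -/
def IsProfile (P : ℕ) (s : ℕ → ℝ) : Prop := ∀ i, i + 1 < P → s i < s (i + 1)

/-- Equilibrium departure time of the first user. -/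
noncomputable def tminus (P : ℕ) (m μ β γ : ℝ) : ℝ :=
  -(m * ((P : ℝ) - 1) / μ) * (γ / (β + γ))

/-- Equilibrium departure time of the last user. -/
noncomputable def tplus (P : ℕ) (m μ β γ : ℝ) : ℝ :=
  tminus P m μ β γ + m * ((P : ℝ) - 1) / μ

/-- Equilibrium trip cost. -/
noncomputable def rho (P : ℕ) (m μ β γ : ℝ) : ℝ :=
  (m * ((P : ℝ) - 1) / μ) * (β * γ / (β + γ))

/-- The equilibrium profile `s^e` (0-indexed: index `k` is the `(k+1)`-st departing user). -/
noncomputable def se (P : ℕ) (m μ β γ : ℝ) (k : ℕ) : ℝ :=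
  if (k : ℤ) ≤ ⌊γ * ((P : ℝ) - 1) / (β + γ)⌋ then
    tminus P m μ β γ + (m * (1 - β) / μ) * (k : ℝ)
  else
    tminus P m μ β γ + (m * (1 + γ) / μ) * (k : ℝ) - m * γ * ((P : ℝ) - 1) / μ

/-- The forecasted cost `Ĉ(t | s) = c`, as a relation (the cases are mutually exclusive
for `t` distinct from all departure times of the strictly increasing profile `s`). -/
def Forecast (P : ℕ) (β γ m μ : ℝ) (s : ℕ → ℝ) (t c : ℝ) : Prop :=
  (∃ k, k + 1 < P ∧ s k < t ∧ t < s (k + 1) ∧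
      arr m μ s (k + 1) - arr m μ s k = m / μ ∧
      c = cost β γ m μ s k +
        (cost β γ m μ s (k + 1) - cost β γ m μ s k) / (s (k + 1) - s k) * (t - s k)) ∨
  (∃ k, k + 1 < P ∧ s k < t ∧ t < s (k + 1) ∧
      m / μ < arr m μ s (k + 1) - arr m μ s k ∧
      ((t ≤ arr m μ s k ∧
          c = cost β γ m μ s k +
            (sdc β γ (arr m μ s k) - cost β γ m μ s k) / (arr m μ s k - s k) * (t - s k)) ∨
        (arr m μ s k < t ∧ c = sdc β γ t))) ∨
  (s (P - 1) < t ∧ t < arr m μ s (P - 1) ∧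
      c = cost β γ m μ s (P - 1) +
        (sdc β γ (arr m μ s (P - 1)) - cost β γ m μ s (P - 1)) /
          (arr m μ s (P - 1) - s (P - 1)) * (t - s (P - 1))) ∨
  ((t < s 0 ∨ arr m μ s (P - 1) ≤ t) ∧ c = sdc β γ t)

/-!
Under `s^e` the bottleneck is busy from `t⁻ = s_1` to `t⁺ = s_P = d_P`: user `k` arrives at
`x_k = t⁻ + (k-1) m/μ` and departs at `x_k + V(x_k) - ρ`, so every trip cost equals `ρ`.
Hence the branches of `Ĉ` with an idle bottleneck or with `t ∈ (s_P, d_P)` never apply, on each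
gap `(s_k, s_{k+1})` the forecast interpolates between two costs equal to `ρ`, and outside
`[t⁻, t⁺]` it is `V(t)`, which exceeds `ρ = V(t⁻) = V(t⁺)`.
-/

section ScheduleDelay

variable {β γ : ℝ}

lemma sdc_of_nonpos {d : ℝ} (hd : d ≤ 0) : sdc β γ d = -(β * d) := by
  rw [sdc, max_eq_left (neg_nonneg.mpr hd), max_eq_right hd]
  ring

lemma sdc_of_nonneg {d : ℝ} (hd : 0 ≤ d) : sdc β γ d = γ * d := by
  rw [sdc, max_eq_right (neg_nonpos.mpr hd), max_eq_left hd]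
  ring

lemma monotone_add_sdc (hβ1 : β ≤ 1) (hγ : 0 ≤ γ) : Monotone fun x => x + sdc β γ x := by
  intro x y hxy
  dsimp only
  rcases le_total y 0 with hy | hy
  · rw [sdc_of_nonpos hy, sdc_of_nonpos (hxy.trans hy)]
    nlinarith
  rcases le_total x 0 with hx | hx
  · rw [sdc_of_nonpos hx, sdc_of_nonneg hy]
    nlinarith
  · rw [sdc_of_nonneg hx, sdc_of_nonneg hy]
    nlinarith

end ScheduleDelay

lemma arr_eq_of_forall_le {m μ : ℝ} {s : ℕ → ℝ} {n : ℕ}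
    (h : ∀ k ≤ n, s k ≤ s 0 + k * (m / μ)) : ∀ k ≤ n, arr m μ s k = s 0 + k * (m / μ) := by
  intro k hk
  induction k with
  | zero => simp [arr]
  | succ k ih =>
    have hs := h (k + 1) hk
    push_cast at hs
    rw [arr, ih (by omega), max_eq_left (by linarith)]
    push_cast
    ring

section Equilibrium

variable {P : ℕ} {m μ β γ : ℝ}

lemma rho_eq_neg_mul_tminus : rho P m μ β γ = -(β * tminus P m μ β γ) := by
  unfold rho tminus
  ring

lemma rho_eq_mul_tplus (hβγ : β + γ ≠ 0) : rho P m μ β γ = γ * tplus P m μ β γ := by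
  unfold rho tplus tminus
  field_simp
  ring

lemma tminus_add_mul (k : ℝ) :
    tminus P m μ β γ + k * (m / μ) = m / μ * (k - γ * ((P : ℝ) - 1) / (β + γ)) := by
  unfold tminus
  ring

lemma tminus_add_mul_pred (hP : 1 ≤ P) :
    tminus P m μ β γ + ((P - 1 : ℕ) : ℝ) * (m / μ) = tplus P m μ β γ := by
  rw [tplus, Nat.cast_pred hP]
  ring

lemma tminus_nonpos (hP : 1 ≤ P) (hm : 0 ≤ m) (hμ : 0 ≤ μ) (hβ : 0 < β) (hγ : 0 < γ) :
    tminus P m μ β γ ≤ 0 := by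
  have : (0 : ℝ) ≤ (P : ℝ) - 1 := by
    rw [sub_nonneg]
    exact_mod_cast hP
  unfold tminus
  rw [neg_mul, neg_nonpos]
  positivity

lemma tplus_nonneg (hP : 1 ≤ P) (hm : 0 ≤ m) (hμ : 0 ≤ μ) (hβ : 0 < β) (hγ : 0 < γ) :
    0 ≤ tplus P m μ β γ := by
  have h := rho_eq_mul_tplus (P := P) (m := m) (μ := μ) (by positivity : β + γ ≠ 0)
  have := tminus_nonpos hP hm hμ hβ hγ
  rw [rho_eq_neg_mul_tminus] at h
  nlinarith

lemma sdc_tminus (hP : 1 ≤ P) (hm : 0 ≤ m) (hμ : 0 ≤ μ) (hβ : 0 < β) (hγ : 0 < γ) :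
    sdc β γ (tminus P m μ β γ) = rho P m μ β γ := by
  rw [sdc_of_nonpos (tminus_nonpos hP hm hμ hβ hγ), rho_eq_neg_mul_tminus]

lemma sdc_tplus (hP : 1 ≤ P) (hm : 0 ≤ m) (hμ : 0 ≤ μ) (hβ : 0 < β) (hγ : 0 < γ) :
    sdc β γ (tplus P m μ β γ) = rho P m μ β γ := by
  rw [sdc_of_nonneg (tplus_nonneg hP hm hμ hβ hγ), rho_eq_mul_tplus (by positivity)]

lemma sdc_le_rho {x : ℝ} (hβ : 0 < β) (hγ : 0 < γ)
    (h₁ : tminus P m μ β γ ≤ x) (h₂ : x ≤ tplus P m μ β γ) : sdc β γ x ≤ rho P m μ β γ := by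
  rcases le_total x 0 with hx | hx
  · rw [sdc_of_nonpos hx, rho_eq_neg_mul_tminus]
    nlinarith
  · rw [sdc_of_nonneg hx, rho_eq_mul_tplus (by positivity)]
    nlinarith

lemma rho_lt_sdc {x : ℝ} (hP : 1 ≤ P) (hm : 0 ≤ m) (hμ : 0 ≤ μ) (hβ : 0 < β) (hγ : 0 < γ)
    (h : x < tminus P m μ β γ ∨ tplus P m μ β γ < x) : rho P m μ β γ < sdc β γ x := by
  have := tminus_nonpos hP hm hμ hβ hγ
  have := tplus_nonneg hP hm hμ hβ hγ
  rcases h with h | h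
  · rw [sdc_of_nonpos (by linarith), rho_eq_neg_mul_tminus]
    nlinarith
  · rw [sdc_of_nonneg (by linarith), rho_eq_mul_tplus (by positivity)]
    nlinarith

/-- The user arriving at `x = t⁻ + k m/μ` behind a busy bottleneck pays exactly `ρ`;
the threshold `o^cr` in the definition of `se` is where `x` changes sign. -/
lemma se_eq (hm : 0 ≤ m) (hμ : 0 ≤ μ) (hβ : 0 < β) (hγ : 0 < γ) (k : ℕ) :
    se P m μ β γ k = tminus P m μ β γ + k * (m / μ) +
      sdc β γ (tminus P m μ β γ + k * (m / μ)) - rho P m μ β γ := by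
  have hq : 0 ≤ m / μ := by positivity
  unfold se
  split_ifs with hk
  · have hk' : (k : ℝ) ≤ γ * ((P : ℝ) - 1) / (β + γ) := by exact_mod_cast Int.le_floor.mp hk
    have hx : tminus P m μ β γ + k * (m / μ) ≤ 0 := by
      rw [tminus_add_mul]
      exact mul_nonpos_of_nonneg_of_nonpos hq (by linarith)
    rw [sdc_of_nonpos hx, rho_eq_neg_mul_tminus]
    ring
  · have hk' : γ * ((P : ℝ) - 1) / (β + γ) < k := by
      exact_mod_cast Int.floor_lt.mp (not_le.mp hk)
    have hx : 0 ≤ tminus P m μ β γ + k * (m / μ) := by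
      rw [tminus_add_mul]
      exact mul_nonneg hq (by linarith)
    rw [sdc_of_nonneg hx, rho_eq_mul_tplus (by positivity), tplus]
    ring

lemma monotone_se (hm : 0 ≤ m) (hμ : 0 ≤ μ) (hβ : 0 < β) (hβ1 : β ≤ 1) (hγ : 0 < γ) :
    Monotone (se P m μ β γ) := by
  intro i j hij
  rw [se_eq hm hμ hβ hγ, se_eq hm hμ hβ hγ, sub_le_sub_iff_right]
  apply monotone_add_sdc hβ1 hγ.le
  gcongr

lemma se_zero (hP : 1 ≤ P) (hm : 0 ≤ m) (hμ : 0 ≤ μ) (hβ : 0 < β) (hγ : 0 < γ) :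
    se P m μ β γ 0 = tminus P m μ β γ := by
  rw [se_eq hm hμ hβ hγ, Nat.cast_zero, zero_mul, add_zero, sdc_tminus hP hm hμ hβ hγ]
  ring

lemma se_pred (hP : 1 ≤ P) (hm : 0 ≤ m) (hμ : 0 ≤ μ) (hβ : 0 < β) (hγ : 0 < γ) :
    se P m μ β γ (P - 1) = tplus P m μ β γ := by
  rw [se_eq hm hμ hβ hγ, tminus_add_mul_pred hP, sdc_tplus hP hm hμ hβ hγ]
  ring

lemma arr_se (hP : 1 ≤ P) (hm : 0 ≤ m) (hμ : 0 ≤ μ) (hβ : 0 < β) (hγ : 0 < γ) {k : ℕ}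
    (hk : k ≤ P - 1) : arr m μ (se P m μ β γ) k = tminus P m μ β γ + k * (m / μ) := by
  have hq : 0 ≤ m / μ := by positivity
  rw [← se_zero hP hm hμ hβ hγ]
  refine arr_eq_of_forall_le (fun i hi => ?_) k hk
  have hi' : (i : ℝ) * (m / μ) ≤ ((P - 1 : ℕ) : ℝ) * (m / μ) := by gcongr
  rw [se_zero hP hm hμ hβ hγ, se_eq hm hμ hβ hγ, add_sub_assoc, add_le_iff_nonpos_right,
    sub_nonpos]
  refine sdc_le_rho hβ hγ (by nlinarith) ?_
  rw [← tminus_add_mul_pred hP]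
  linarith

lemma arr_se_pred (hP : 1 ≤ P) (hm : 0 ≤ m) (hμ : 0 ≤ μ) (hβ : 0 < β) (hγ : 0 < γ) :
    arr m μ (se P m μ β γ) (P - 1) = tplus P m μ β γ := by
  rw [arr_se hP hm hμ hβ hγ le_rfl, tminus_add_mul_pred hP]

lemma cost_se (hP : 1 ≤ P) (hm : 0 ≤ m) (hμ : 0 ≤ μ) (hβ : 0 < β) (hγ : 0 < γ) {k : ℕ}
    (hk : k ≤ P - 1) : cost β γ m μ (se P m μ β γ) k = rho P m μ β γ := by
  rw [cost, arr_se hP hm hμ hβ hγ hk, se_eq hm hμ hβ hγ]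
  ring

end Equilibrium

theorem forecast_at_equilibrium_general (P : ℕ) (hP : 2 ≤ P) (m μ β γ : ℝ)
    (hm : 0 < m) (hμ : 0 < μ)
    (hβ : 0 < β) (hβ1 : β < 1) (hγ : 0 < γ)
    (t : ℝ) (ht : ∀ k, k < P → t ≠ se P m μ β γ k)
    (c : ℝ) (hf : Forecast P β γ m μ (se P m μ β γ) t c) :
    rho P m μ β γ ≤ c ∧
    (tminus P m μ β γ < t → t < tplus P m μ β γ → c = rho P m μ β γ) ∧
    ((t < tminus P m μ β γ ∨ tplus P m μ β γ < t) →
      c = sdc β γ t ∧ rho P m μ β γ < c) := by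
  have hP1 : 1 ≤ P := by omega
  have hm := hm.le
  have hμ := hμ.le
  have hse := monotone_se (P := P) hm hμ hβ hβ1.le hγ
  have hs₀ := se_zero hP1 hm hμ hβ hγ
  have hs₁ := se_pred hP1 hm hμ hβ hγ
  have hd₁ := arr_se_pred hP1 hm hμ hβ hγ
  rcases hf with ⟨k, hk, hkt, htk, -, rfl⟩ | ⟨k, hk, -, -, hgap, -⟩ | ⟨hlast, hlast', -⟩ |
    ⟨hout, rfl⟩
  · rw [cost_se hP1 hm hμ hβ hγ (by omega), cost_se hP1 hm hμ hβ hγ (by omega), sub_self,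
      zero_div, zero_mul, add_zero]
    have h₁ : tminus P m μ β γ < t := hs₀ ▸ (hse (Nat.zero_le k)).trans_lt hkt
    have h₂ : t < tplus P m μ β γ := hs₁ ▸ htk.trans_le (hse (by omega : k + 1 ≤ P - 1))
    exact ⟨le_rfl, fun _ _ => rfl, fun h => by rcases h with h | h <;> linarith⟩
  · rw [arr_se hP1 hm hμ hβ hγ (by omega), arr_se hP1 hm hμ hβ hγ (by omega)] at hgap
    push_cast at hgap
    linarith
  · linarith
  · have hout' : t < tminus P m μ β γ ∨ tplus P m μ β γ < t := by
      rw [← hs₀, ← hs₁]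
      rw [hd₁, ← hs₁] at hout
      exact hout.imp_right fun h => h.lt_of_ne' (ht (P - 1) (by omega))
    have hlt := rho_lt_sdc hP1 hm hμ hβ hγ hout'
    refine ⟨hlt.le, fun h₁ h₂ => ?_, fun _ => ⟨rfl, hlt⟩⟩
    rcases hout' with h | h <;> linarith

theorem forecast_at_equilibrium (P : ℕ) (hP : 2 ≤ P) (m μ β γ : ℝ)
    (hm : 0 < m) (hm1 : m ≤ 1) (hμ : 0 < μ)
    (hβ : 0 < β) (hβ1 : β < 1) (hγ : 0 < γ)
    (t : ℝ) (ht : ∀ k, k < P → t ≠ se P m μ β γ k)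
    (c : ℝ) (hf : Forecast P β γ m μ (se P m μ β γ) t c) :
    rho P m μ β γ ≤ c ∧
    (tminus P m μ β γ < t → t < tplus P m μ β γ → c = rho P m μ β γ) ∧
    ((t < tminus P m μ β γ ∨ tplus P m μ β γ < t) →
      c = sdc β γ t ∧ rho P m μ β γ < c) :=
  forecast_at_equilibrium_general P hP m μ β γ hm hμ hβ hβ1 hγ t ht c hf
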